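/- arXiv:2308.09869 — 2 statements merged into one kernel-verified Lean document; each statement's English description precedes it below -/
import Mathlib

section
/- Let X ∼ U(0,1) and Y ∼ U(0, 1/2) be independent, and let P = U(0,1), Q = U(0,1/2). Then P(D_T(X, P) ≤ D_T(Y, P)) = 1/2 and P(D_T(Y, Q) ≤ D_T(X, Q)) = 1/4, where D_T is the univariate Tukey depth. -/
open MeasureTheory ProbabilityTheory Set

/-- CDF of `U(0,1)`. -/
noncomputable def FP (x : ℝ) : ℝ := min (max x 0) 1

/-- CDF of `U(0,1/2)`. -/
noncomputable def FQ (y : ℝ) : ℝ := min (max (2 * y) 0) 1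

/-- Tukey depth with respect to `P = U(0,1)`. -/
noncomputable def DTP (x : ℝ) : ℝ := min (FP x) (1 - FP x)

/-- Tukey depth with respect to `Q = U(0,1/2)`. -/
noncomputable def DTQ (y : ℝ) : ℝ := min (FQ y) (1 - FQ y)

lemma DTP_continuous : Continuous DTP := by
  unfold DTP FP; fun_prop

lemma DTQ_continuous : Continuous DTQ := by
  unfold DTQ FQ; fun_prop

lemma DTP_eq_of_Ioo {x : ℝ} (hx : x ∈ Ioo (0:ℝ) 1) : DTP x = min x (1 - x) := by
  obtain ⟨h0, h1⟩ := hx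
  unfold DTP FP
  rw [max_eq_left h0.le, min_eq_left h1.le]

lemma DTQ_eq_of_Ioo {y : ℝ} (hy : y ∈ Ioo (0:ℝ) (1/2)) :
    DTQ y = min (2 * y) (1 - 2 * y) := by
  obtain ⟨h0, h1⟩ := hy
  have hFQ : FQ y = 2 * y := by
    unfold FQ; rw [max_eq_left (by linarith), min_eq_left (by linarith)]
  unfold DTQ; rw [hFQ]

lemma DTQ_nonneg (x : ℝ) : 0 ≤ DTQ x := by
  unfold DTQ FQ
  rcases le_or_gt (max (2*x) 0) 1 with h | h
  · rw [min_eq_left h]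
    exact le_min (le_max_right _ _) (by linarith)
  · rw [min_eq_right h.le]; simp

lemma DTQ_le_half (x : ℝ) : DTQ x ≤ 1/2 := by
  unfold DTQ
  rcases le_or_gt (FQ x) (1/2) with h | h
  · exact le_trans (min_le_left _ _) h
  · exact le_trans (min_le_right _ _) (by linarith)

lemma DTQ_eq_of_Icc1 {x : ℝ} (hx : x ∈ Icc (0:ℝ) (1/4)) : DTQ x = 2 * x := by
  obtain ⟨h0, h1⟩ := hx
  have hFQ : FQ x = 2 * x := by
    unfold FQ; rw [max_eq_left (by linarith), min_eq_left (by linarith)]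
  unfold DTQ; rw [hFQ, min_eq_left (by linarith)]

lemma DTQ_eq_of_Icc2 {x : ℝ} (hx : x ∈ Icc (1/4:ℝ) (1/2)) : DTQ x = 1 - 2 * x := by
  obtain ⟨h0, h1⟩ := hx
  have hFQ : FQ x = 2 * x := by
    unfold FQ; rw [max_eq_left (by linarith), min_eq_left (by linarith)]
  unfold DTQ; rw [hFQ, min_eq_right (by linarith)]

lemma DTQ_eq_of_Icc3 {x : ℝ} (hx : x ∈ Icc (1/2:ℝ) 1) : DTQ x = 0 := by
  obtain ⟨h0, h1⟩ := hx
  have hFQ : FQ x = 1 := by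
    unfold FQ; rw [max_eq_left (by linarith), min_eq_right (by linarith)]
  unfold DTQ; rw [hFQ]; norm_num

/-- the inner measure for part 1 -/
lemma inner1 {x : ℝ} (hx : x ∈ Ioo (0:ℝ) 1) :
    ((2 : ENNReal) • volume.restrict (Ioo (0 : ℝ) (1 / 2))) {y | DTP x ≤ DTP y}
      = ENNReal.ofReal (1 - 2 * min x (1 - x)) := by
  obtain ⟨h0, h1⟩ := hx
  have hc0 : 0 < min x (1 - x) := lt_min h0 (by linarith)
  have hc2 : min x (1 - x) ≤ 1/2 := by
    rcases min_le_iff.mpr (Or.inl (le_refl x)) with _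
    rcases le_total x (1 - x) with h | h
    · rw [min_eq_left h]; linarith
    · rw [min_eq_right h]; linarith
  have hset : {y | DTP x ≤ DTP y} ∩ Ioo (0:ℝ) (1/2) = Ico (min x (1 - x)) (1/2) := by
    ext y
    simp only [mem_inter_iff, mem_setOf_eq, mem_Ioo, mem_Ico]
    constructor
    · rintro ⟨hle, hy0, hy2⟩
      have : DTP y = y := by
        rw [DTP_eq_of_Ioo ⟨hy0, by linarith⟩, min_eq_left (by linarith)]
      rw [DTP_eq_of_Ioo ⟨h0, h1⟩, this] at hle
      exact ⟨hle, hy2⟩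
    · rintro ⟨hcy, hy2⟩
      have hy0 : 0 < y := lt_of_lt_of_le hc0 hcy
      have : DTP y = y := by
        rw [DTP_eq_of_Ioo ⟨hy0, by linarith⟩, min_eq_left (by linarith)]
      rw [DTP_eq_of_Ioo ⟨h0, h1⟩, this]
      exact ⟨hcy, hy0, hy2⟩
  rw [Measure.smul_apply, Measure.restrict_apply' measurableSet_Ioo, hset,
    Real.volume_Ico, smul_eq_mul]
  rw [show (2:ENNReal) = ENNReal.ofReal 2 by simp, ← ENNReal.ofReal_mul (by norm_num)]
  congr 1
  ring

/-- the inner measure for part 2 -/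
lemma inner2 (x : ℝ) :
    ((2 : ENNReal) • volume.restrict (Ioo (0 : ℝ) (1 / 2))) {y | DTQ y ≤ DTQ x}
      = ENNReal.ofReal (2 * DTQ x) := by
  set c := DTQ x with hc
  have hc0 : 0 ≤ c := DTQ_nonneg x
  have hc2 : c ≤ 1/2 := DTQ_le_half x
  have hset : {y | DTQ y ≤ c} ∩ Ioo (0:ℝ) (1/2)
      = Ioc 0 (c/2) ∪ Ico ((1 - c)/2) (1/2) := by
    ext y
    simp only [mem_inter_iff, mem_setOf_eq, mem_Ioo, mem_union, mem_Ioc, mem_Ico]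
    constructor
    · rintro ⟨hle, hy0, hy2⟩
      rw [DTQ_eq_of_Ioo ⟨hy0, hy2⟩] at hle
      rcases min_le_iff.mp hle with h | h
      · exact Or.inl ⟨hy0, by linarith⟩
      · exact Or.inr ⟨by linarith, hy2⟩
    · rintro (⟨hy0, hyc⟩ | ⟨hyc, hy2⟩)
      · have hy2 : y < 1/2 := by linarith
        refine ⟨?_, hy0, hy2⟩
        rw [DTQ_eq_of_Ioo ⟨hy0, hy2⟩]
        exact le_trans (min_le_left _ _) (by linarith)
      · have hy0 : 0 < y := by linarith
        refine ⟨?_, hy0, hy2⟩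
        rw [DTQ_eq_of_Ioo ⟨hy0, hy2⟩]
        exact le_trans (min_le_right _ _) (by linarith)
  rw [Measure.smul_apply, Measure.restrict_apply' measurableSet_Ioo, hset, smul_eq_mul]
  have hinter : volume (Ioc (0:ℝ) (c/2) ∩ Ico ((1 - c)/2) (1/2)) = 0 := by
    have hsub : Ioc (0:ℝ) (c/2) ∩ Ico ((1 - c)/2) (1/2) ⊆ Icc ((1 - c)/2) (c/2) := by
      rintro y ⟨⟨_, h1⟩, h2, _⟩; exact ⟨h2, h1⟩
    refine le_antisymm (le_trans (measure_mono hsub) ?_) zero_le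
    rw [Real.volume_Icc]
    simp [ENNReal.ofReal_eq_zero.mpr (by linarith : c/2 - (1 - c)/2 ≤ 0)]
  have hU : volume (Ioc (0:ℝ) (c/2) ∪ Ico ((1 - c)/2) (1/2))
      = ENNReal.ofReal (c/2) + ENNReal.ofReal (c/2) := by
    have := measure_union_add_inter (μ := volume) (t := Ico ((1 - c)/2) (1/2)) (Ioc (0:ℝ) (c/2)) measurableSet_Ico
    rw [hinter, add_zero] at this
    rw [this, Real.volume_Ioc, Real.volume_Ico]
    congr 1
    · congr 1; ring
    · congr 1; ring
  rw [hU, ← ENNReal.ofReal_add (by linarith) (by linarith),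
    show (2:ENNReal) = ENNReal.ofReal 2 by simp, ← ENNReal.ofReal_mul (by norm_num)]
  congr 1
  ring

lemma integral1 : ∫ x in Ioo (0:ℝ) 1, (1 - 2 * min x (1 - x)) = 1/2 := by
  rw [← integral_Ioc_eq_integral_Ioo, ← intervalIntegral.integral_of_le (by norm_num : (0:ℝ) ≤ 1)]
  have hcont : Continuous fun x : ℝ => 1 - 2 * min x (1 - x) := by fun_prop
  have hsplit := intervalIntegral.integral_add_adjacent_intervals (μ := volume)
    (a := 0) (b := 1/2) (c := 1) (f := fun x : ℝ => 1 - 2 * min x (1 - x))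
    (hcont.intervalIntegrable _ _) (hcont.intervalIntegrable _ _)
  rw [← hsplit]
  have h1 : ∫ x in (0:ℝ)..(1/2), (1 - 2 * min x (1 - x)) = ∫ x in (0:ℝ)..(1/2), (1 - 2 * x) := by
    apply intervalIntegral.integral_congr
    intro y hy
    rw [uIcc_of_le (by norm_num)] at hy
    obtain ⟨hy0, hy1⟩ := hy
    simp only
    rw [min_eq_left (by linarith)]
  have h2 : ∫ x in (1/2:ℝ)..1, (1 - 2 * min x (1 - x)) = ∫ x in (1/2:ℝ)..1, (1 - 2 * (1 - x)) := by
    apply intervalIntegral.integral_congr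
    intro y hy
    rw [uIcc_of_le (by norm_num)] at hy
    obtain ⟨hy0, hy1⟩ := hy
    simp only
    rw [min_eq_right (by linarith)]
  rw [h1, h2]
  have e1 : ∫ x in (0:ℝ)..(1/2), (1 - 2 * x) = 1/4 := by
    rw [intervalIntegral.integral_sub intervalIntegrable_const
      ((intervalIntegral.intervalIntegrable_id).const_mul 2),
      intervalIntegral.integral_const_mul, integral_id]
    simp; norm_num
  have e2 : ∫ x in (1/2:ℝ)..1, (1 - 2 * (1 - x)) = 1/4 := by
    have : (fun x : ℝ => 1 - 2 * (1 - x)) = fun x : ℝ => 2 * x - 1 := by ext x; ring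
    rw [this, intervalIntegral.integral_sub
      ((intervalIntegral.intervalIntegrable_id).const_mul 2) intervalIntegrable_const,
      intervalIntegral.integral_const_mul, integral_id]
    simp; norm_num
  rw [e1, e2]; norm_num

lemma integral2 : ∫ x in Ioo (0:ℝ) 1, (2 * DTQ x) = 1/4 := by
  rw [← integral_Ioc_eq_integral_Ioo, ← intervalIntegral.integral_of_le (by norm_num : (0:ℝ) ≤ 1)]
  have hcont : Continuous fun x : ℝ => 2 * DTQ x := by
    exact continuous_const.mul DTQ_continuous
  have hsplit2 := intervalIntegral.integral_add_adjacent_intervals (μ := volume)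
    (a := 1/4) (b := 1/2) (c := 1) (f := fun x : ℝ => 2 * DTQ x)
    (hcont.intervalIntegrable _ _) (hcont.intervalIntegrable _ _)
  have hsplit1 := intervalIntegral.integral_add_adjacent_intervals (μ := volume)
    (a := 0) (b := 1/4) (c := 1) (f := fun x : ℝ => 2 * DTQ x)
    (hcont.intervalIntegrable _ _) (hcont.intervalIntegrable _ _)
  rw [← hsplit1, ← hsplit2]
  have e1 : ∫ x in (0:ℝ)..(1/4), 2 * DTQ x = ∫ x in (0:ℝ)..(1/4), 2 * (2 * x) := by
    apply intervalIntegral.integral_congr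
    intro y hy
    rw [uIcc_of_le (by norm_num)] at hy
    simp only; rw [DTQ_eq_of_Icc1 hy]
  have e2 : ∫ x in (1/4:ℝ)..(1/2), 2 * DTQ x = ∫ x in (1/4:ℝ)..(1/2), 2 * (1 - 2 * x) := by
    apply intervalIntegral.integral_congr
    intro y hy
    rw [uIcc_of_le (by norm_num)] at hy
    simp only; rw [DTQ_eq_of_Icc2 hy]
  have e3 : ∫ x in (1/2:ℝ)..1, 2 * DTQ x = 0 := by
    rw [show (0:ℝ) = ∫ x in (1/2:ℝ)..1, (0:ℝ) by simp]
    apply intervalIntegral.integral_congr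
    intro y hy
    rw [uIcc_of_le (by norm_num)] at hy
    simp only; rw [DTQ_eq_of_Icc3 hy]; ring
  rw [e1, e2, e3]
  have v1 : ∫ x in (0:ℝ)..(1/4), 2 * (2 * x) = 1/8 := by
    have : (fun x : ℝ => 2 * (2 * x)) = fun x : ℝ => 4 * x := by ext x; ring
    rw [this, intervalIntegral.integral_const_mul, integral_id]
    norm_num
  have v2 : ∫ x in (1/4:ℝ)..(1/2), 2 * (1 - 2 * x) = 1/8 := by
    have : (fun x : ℝ => 2 * (1 - 2 * x)) = fun x : ℝ => 2 - 4 * x := by ext x; ring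
    rw [this, intervalIntegral.integral_sub intervalIntegrable_const
      ((intervalIntegral.intervalIntegrable_id).const_mul 4),
      intervalIntegral.integral_const_mul, integral_id,
      intervalIntegral.integral_const]
    norm_num
  rw [v1, v2]; norm_num

/-- For independent `X ∼ U(0,1)` and `Y ∼ U(0,1/2)`:
`P(D_T(X,P) ≤ D_T(Y,P)) = 1/2` and `P(D_T(Y,Q) ≤ D_T(X,Q)) = 1/4`. -/
theorem tukey_rank_probs {Ω : Type*} [MeasurableSpace Ω] (μ : Measure Ω)
    [IsProbabilityMeasure μ] (X Y : Ω → ℝ) (hX : Measurable X) (hY : Measurable Y)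
    (hindep : IndepFun X Y μ)
    (hXlaw : Measure.map X μ = volume.restrict (Ioo (0 : ℝ) 1))
    (hYlaw : Measure.map Y μ = (2 : ENNReal) • volume.restrict (Ioo (0 : ℝ) (1 / 2))) :
    (μ {ω | DTP (X ω) ≤ DTP (Y ω)}).toReal = 1 / 2 ∧
    (μ {ω | DTQ (Y ω) ≤ DTQ (X ω)}).toReal = 1 / 4 := by
  have hmap : Measure.map (fun ω => (X ω, Y ω)) μ
      = (Measure.map X μ).prod (Measure.map Y μ) :=
    (indepFun_iff_map_prod_eq_prod_map_map hX.aemeasurable hY.aemeasurable).mp hindep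
  rw [hXlaw, hYlaw] at hmap
  have hmeasP : Measurable DTP := DTP_continuous.measurable
  have hmeasQ : Measurable DTQ := DTQ_continuous.measurable
  constructor
  · -- part 1
    have hS : MeasurableSet {p : ℝ × ℝ | DTP p.1 ≤ DTP p.2} :=
      measurableSet_le (hmeasP.comp measurable_fst) (hmeasP.comp measurable_snd)
    have key : μ {ω | DTP (X ω) ≤ DTP (Y ω)}
        = Measure.map (fun ω => (X ω, Y ω)) μ {p : ℝ × ℝ | DTP p.1 ≤ DTP p.2} := by
      rw [Measure.map_apply (hX.prodMk hY) hS]; rfl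
    rw [key, hmap, Measure.prod_apply hS]
    have : ∫⁻ x, ((2 : ENNReal) • volume.restrict (Ioo (0 : ℝ) (1 / 2)))
        (Prod.mk x ⁻¹' {p : ℝ × ℝ | DTP p.1 ≤ DTP p.2}) ∂(volume.restrict (Ioo (0:ℝ) 1))
        = ∫⁻ x in Ioo (0:ℝ) 1, ENNReal.ofReal (1 - 2 * min x (1 - x)) ∂volume := by
      apply setLIntegral_congr_fun measurableSet_Ioo
      intro x hx
      beta_reduce
      have : Prod.mk x ⁻¹' {p : ℝ × ℝ | DTP p.1 ≤ DTP p.2} = {y | DTP x ≤ DTP y} := rfl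
      rw [this, inner1 hx]
    rw [this, ← ofReal_integral_eq_lintegral_ofReal]
    · rw [integral1]; simp
    · exact (Continuous.integrableOn_Ioc (by fun_prop)).mono_set Ioo_subset_Ioc_self
    · filter_upwards with x
      have : min x (1 - x) ≤ 1/2 := by
        rcases le_total x (1 - x) with h | h
        · rw [min_eq_left h]; linarith
        · rw [min_eq_right h]; linarith
      simp only [Pi.zero_apply]; linarith
  · -- part 2
    have hS : MeasurableSet {p : ℝ × ℝ | DTQ p.2 ≤ DTQ p.1} :=
      measurableSet_le (hmeasQ.comp measurable_snd) (hmeasQ.comp measurable_fst)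
    have key : μ {ω | DTQ (Y ω) ≤ DTQ (X ω)}
        = Measure.map (fun ω => (X ω, Y ω)) μ {p : ℝ × ℝ | DTQ p.2 ≤ DTQ p.1} := by
      rw [Measure.map_apply (hX.prodMk hY) hS]; rfl
    rw [key, hmap, Measure.prod_apply hS]
    have : ∫⁻ x, ((2 : ENNReal) • volume.restrict (Ioo (0 : ℝ) (1 / 2)))
        (Prod.mk x ⁻¹' {p : ℝ × ℝ | DTQ p.2 ≤ DTQ p.1}) ∂(volume.restrict (Ioo (0:ℝ) 1))
        = ∫⁻ x in Ioo (0:ℝ) 1, ENNReal.ofReal (2 * DTQ x) ∂volume := by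
      apply setLIntegral_congr_fun measurableSet_Ioo
      intro x hx
      beta_reduce
      have : Prod.mk x ⁻¹' {p : ℝ × ℝ | DTQ p.2 ≤ DTQ p.1} = {y | DTQ y ≤ DTQ x} := rfl
      rw [this, inner2 x]
    rw [this, ← ofReal_integral_eq_lintegral_ofReal]
    · rw [integral2]; simp
    · exact (Continuous.integrableOn_Ioc (by exact continuous_const.mul DTQ_continuous)).mono_set
        Ioo_subset_Ioc_self
    · filter_upwards with x
      have := DTQ_nonneg x
      simp only [Pi.zero_apply]; linarith
end

section
/- For i.i.d. samples X₁,…,X_m ∼ P and Y₁,…,Y_n ∼ P (all independent, P continuous on ℝ), the two-sample Tukey-depth statistics satisfy almost surely: L̃S_T(P̂_m, Q̂_n) + L̃S_T(Q̂_n, P̂_m) − 1 ≤ 0, where L̃S_T(P̂_m, Q̂_n) = (mn)^{−1} Σ_{i,j} 𝟙{D_T(X_i, P̂_m) ≤ D_T(Y_j, P̂_m)} and L̃S_T(Q̂_n, P̂_m) is defined with the roles of the samples exchanged. -/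
open MeasureTheory ProbabilityTheory Finset

/-- The empirical univariate Tukey depth of `y` with respect to the sample `x`. -/
noncomputable def empTukey {m : ℕ} (x : Fin m → ℝ) (y : ℝ) : ℝ :=
  min (((Finset.univ.filter fun j => x j ≤ y).card : ℝ) / m)
    (((Finset.univ.filter fun j => y ≤ x j).card : ℝ) / m)

/-- The Liu–Singh statistic `L̃S_T(P̂_m, Q̂_n) = (mn)⁻¹ ∑_{i,j} 1{D_T(X_i, P̂_m) ≤ D_T(Y_j, P̂_m)}`
based on the empirical Tukey depth of the first sample. -/
noncomputable def LS {m n : ℕ} (x : Fin m → ℝ) (y : Fin n → ℝ) : ℝ :=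
  (∑ i : Fin m, ∑ j : Fin n,
      if empTukey x (x i) ≤ empTukey x (y j) then (1 : ℝ) else 0) / (m * n)

lemma ae_ne_of_indep {Ω : Type*} [MeasurableSpace Ω] (μ : Measure Ω) [IsProbabilityMeasure μ]
    (P : Measure ℝ) [IsProbabilityMeasure P] (hP : ∀ c : ℝ, P {c} = 0)
    {f g : Ω → ℝ} (hf : Measurable f) (hg : Measurable g)
    (h : IndepFun f g μ) (hfl : Measure.map f μ = P) (hgl : Measure.map g μ = P) :
    ∀ᵐ ω ∂μ, f ω ≠ g ω := by
  have hmap : Measure.map (fun ω => (f ω, g ω)) μ = P.prod P := by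
    rw [(indepFun_iff_map_prod_eq_prod_map_map hf.aemeasurable hg.aemeasurable).mp h, hfl, hgl]
  have hdiag : MeasurableSet {p : ℝ × ℝ | p.1 = p.2} :=
    measurableSet_eq_fun measurable_fst measurable_snd
  have : μ {ω | f ω = g ω} = (P.prod P) {p : ℝ × ℝ | p.1 = p.2} := by
    rw [← hmap, Measure.map_apply (hf.prodMk hg) hdiag]
    rfl
  have hz : (P.prod P) {p : ℝ × ℝ | p.1 = p.2} = 0 := by
    rw [Measure.prod_apply hdiag]
    have : ∀ x : ℝ, P (Prod.mk x ⁻¹' {p : ℝ × ℝ | p.1 = p.2}) = 0 := by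
      intro x
      have : (Prod.mk x ⁻¹' {p : ℝ × ℝ | p.1 = p.2}) = {x} := by
        ext z; simp [eq_comm]
      rw [this]; exact hP x
    simp only [this]
    exact lintegral_zero
  rw [ae_iff]
  simpa [this] using hz



-- injectivity of the rank functions
lemma rank_inj {m : ℕ} (x : Fin m → ℝ) (hx : Function.Injective x) :
    Function.Injective (fun i => (Finset.univ.filter fun j => x j ≤ x i).card) := by
  intro a b hab
  by_contra hne
  have hxne : x a ≠ x b := fun h => hne (hx h)
  rcases lt_or_gt_of_ne hxne with h | h
  · have hsub : (Finset.univ.filter fun j => x j ≤ x a) ⊂ (Finset.univ.filter fun j => x j ≤ x b) := by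
      refine Finset.ssubset_iff_of_subset ?_ |>.mpr ?_
      · intro j hj
        simp only [mem_filter, mem_univ, true_and] at *
        exact hj.trans h.le
      · exact ⟨b, by simp, by simp [not_le.mpr h]⟩
    exact absurd hab (Nat.ne_of_lt (Finset.card_lt_card hsub))
  · have hsub : (Finset.univ.filter fun j => x j ≤ x b) ⊂ (Finset.univ.filter fun j => x j ≤ x a) := by
      refine Finset.ssubset_iff_of_subset ?_ |>.mpr ?_
      · intro j hj
        simp only [mem_filter, mem_univ, true_and] at *
        exact hj.trans h.le
      · exact ⟨a, by simp, by simp [not_le.mpr h]⟩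
    exact absurd hab.symm (Nat.ne_of_lt (Finset.card_lt_card hsub))

lemma rank_inj' {m : ℕ} (x : Fin m → ℝ) (hx : Function.Injective x) :
    Function.Injective (fun i => (Finset.univ.filter fun j => x i ≤ x j).card) := by
  have := rank_inj (fun i => -(x i)) (fun a b h => hx (neg_injective h))
  convert this using 2 with i
  simp only [neg_le_neg_iff]

-- the per-j counting bound
lemma countA {m : ℕ} (hm : 0 < m) (x : Fin m → ℝ) (hx : Function.Injective x)
    (t : ℝ) (ht : ∀ i, x i ≠ t) :
    ((Finset.univ.filter fun i => empTukey x (x i) ≤ empTukey x t).card : ℕ)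
      ≤ 2 * min ((Finset.univ.filter fun i => x i < t).card)
          ((Finset.univ.filter fun i => t < x i).card) := by
  have hmR : (0:ℝ) < m := by exact_mod_cast hm
  set K := min ((Finset.univ.filter fun i => x i < t).card)
      ((Finset.univ.filter fun i => t < x i).card) with hK
  -- empTukey x t = K / m
  have h1 : (Finset.univ.filter fun j => x j ≤ t) = (Finset.univ.filter fun i => x i < t) := by
    apply Finset.filter_congr; intro i _; simp [lt_iff_le_and_ne, ht i]
  have h2 : (Finset.univ.filter fun j => t ≤ x j) = (Finset.univ.filter fun i => t < x i) := by
    apply Finset.filter_congr; intro i _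
    simp [lt_iff_le_and_ne, (ht i).symm, eq_comm]
  have hEt : empTukey x t = (K : ℝ) / m := by
    rw [empTukey, h1, h2, min_div_div_right hmR.le, hK]
    rw [Nat.cast_min]
  -- condition rewriting
  have hcond : ∀ i, (empTukey x (x i) ≤ empTukey x t ↔
      min ((Finset.univ.filter fun j => x j ≤ x i).card)
        ((Finset.univ.filter fun j => x i ≤ x j).card) ≤ K) := by
    intro i
    rw [hEt, empTukey, min_div_div_right hmR.le, div_le_div_iff_of_pos_right hmR]
    exact_mod_cast Iff.rfl
  calc (Finset.univ.filter fun i => empTukey x (x i) ≤ empTukey x t).card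
      = (Finset.univ.filter fun i =>
          ((Finset.univ.filter fun j => x j ≤ x i).card ≤ K ∨
           (Finset.univ.filter fun j => x i ≤ x j).card ≤ K)).card := by
        congr 1
        apply Finset.filter_congr
        intro i _
        rw [hcond i, min_le_iff]
    _ ≤ ((Finset.univ.filter fun i => (Finset.univ.filter fun j => x j ≤ x i).card ≤ K)
          ∪ (Finset.univ.filter fun i => (Finset.univ.filter fun j => x i ≤ x j).card ≤ K)).card := by
        rw [← Finset.filter_or]
    _ ≤ (Finset.univ.filter fun i => (Finset.univ.filter fun j => x j ≤ x i).card ≤ K).card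
        + (Finset.univ.filter fun i => (Finset.univ.filter fun j => x i ≤ x j).card ≤ K).card :=
        Finset.card_union_le _ _
    _ ≤ K + K := by
        gcongr
        · refine Finset.card_le_card_of_injOn (t := Finset.Icc 1 K) (fun i => (Finset.univ.filter fun j => x j ≤ x i).card)
            (fun i hi => ?_) (fun a _ b _ h => rank_inj x hx h) |>.trans_eq (by simp [Nat.card_Icc])
          simp only [Finset.mem_coe, mem_filter, mem_univ, true_and] at hi
          refine Finset.mem_Icc.mpr ⟨?_, hi⟩
          exact Finset.card_pos.mpr ⟨i, by simp⟩
        · refine Finset.card_le_card_of_injOn (t := Finset.Icc 1 K) (fun i => (Finset.univ.filter fun j => x i ≤ x j).card)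
            (fun i hi => ?_) (fun a _ b _ h => rank_inj' x hx h) |>.trans_eq (by simp [Nat.card_Icc])
          simp only [Finset.mem_coe, mem_filter, mem_univ, true_and] at hi
          refine Finset.mem_Icc.mpr ⟨?_, hi⟩
          exact Finset.card_pos.mpr ⟨i, by simp⟩
    _ = 2 * K := (two_mul K).symm


lemma exists_cut {m n : ℕ} (hm : 0 < m) (hn : 0 < n) (x : Fin m → ℝ) (y : Fin n → ℝ)
    (hd : ∀ i j, x i ≠ y j) :
    ∃ d : ℝ, (∑ i : Fin m, if x i ≤ d then (1:ℤ) else -1)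
      * (∑ j : Fin n, if y j ≤ d then (1:ℤ) else -1) ≤ 0 := by
  by_contra hcon
  push_neg at hcon
  set F : ℝ → ℤ := fun d => ∑ i : Fin m, if x i ≤ d then (1:ℤ) else -1 with hF
  set G : ℝ → ℤ := fun d => ∑ j : Fin n, if y j ≤ d then (1:ℤ) else -1 with hG
  have hpos : ∀ d, (0 < F d ∧ 0 < G d) ∨ (F d < 0 ∧ G d < 0) := fun d =>
    mul_pos_iff.mp (hcon d)
  set s : Finset ℝ := (Finset.univ.image x) ∪ (Finset.univ.image y) with hs
  have hxs : ∀ i, x i ∈ s := fun i => Finset.mem_union_left _ (Finset.mem_image_of_mem x (mem_univ i))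
  have hys : ∀ j, y j ∈ s := fun j => Finset.mem_union_right _ (Finset.mem_image_of_mem y (mem_univ j))
  have hsne : s.Nonempty := ⟨x ⟨0, hm⟩, hxs _⟩
  -- the top element has F > 0 and G > 0
  set top := s.max' hsne with htop
  have hFtop : 0 < F top := by
    have : F top = m := by
      simp only [hF]
      rw [Finset.sum_congr rfl (fun i _ => if_pos (Finset.le_max' s _ (hxs i)))]
      simp
    rw [this]; exact_mod_cast hm
  have hGtop : 0 < G top := by
    have : G top = n := by
      simp only [hG]
      rw [Finset.sum_congr rfl (fun j _ => if_pos (Finset.le_max' s _ (hys j)))]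
      simp
    rw [this]; exact_mod_cast hn
  -- minimal element of s where both positive
  set S := s.filter (fun d => 0 < F d ∧ 0 < G d) with hS
  have hSne : S.Nonempty := ⟨top, Finset.mem_filter.mpr ⟨s.max'_mem hsne, hFtop, hGtop⟩⟩
  set d0 := S.min' hSne with hd0
  have hd0S : d0 ∈ S := S.min'_mem hSne
  have hd0s : d0 ∈ s := (Finset.mem_filter.mp hd0S).1
  have hFd0 : 0 < F d0 := (Finset.mem_filter.mp hd0S).2.1
  have hGd0 : 0 < G d0 := (Finset.mem_filter.mp hd0S).2.2
  -- d0 is in the range of x or of y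
  have hd0r : (∃ i, x i = d0) ∨ (∃ j, y j = d0) := by
    rcases Finset.mem_union.mp hd0s with h | h
    · exact Or.inl (by simpa using Finset.mem_image.mp h |>.imp fun i hi => hi.2)
    · exact Or.inr (by simpa using Finset.mem_image.mp h |>.imp fun j hj => hj.2)
  set T := s.filter (fun e => e < d0) with hT
  by_cases hTne : T.Nonempty
  · -- predecessor d1
    set d1 := T.max' hTne with hd1
    have hd1T : d1 ∈ T := T.max'_mem hTne
    have hd1s : d1 ∈ s := (Finset.mem_filter.mp hd1T).1
    have hd1lt : d1 < d0 := (Finset.mem_filter.mp hd1T).2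
    have hd1notS : d1 ∉ S := fun h => absurd (S.min'_le _ h) (not_le.mpr hd1lt)
    have hneg : F d1 < 0 ∧ G d1 < 0 := by
      rcases hpos d1 with h | h
      · exact absurd (Finset.mem_filter.mpr ⟨hd1s, h⟩) hd1notS
      · exact h
    rcases hd0r with ⟨i0, hi0⟩ | ⟨j0, hj0⟩
    · -- d0 is an x value; G unchanged from d1 to d0
      have : G d1 = G d0 := by
        simp only [hG]
        refine Finset.sum_congr rfl fun j _ => ?_
        congr 1
        simp only [eq_iff_iff]
        constructor
        · exact fun h => h.trans hd1lt.le
        · intro h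
          have hne : y j ≠ d0 := by rw [← hi0]; exact (hd i0 j).symm
          have : y j < d0 := lt_of_le_of_ne h hne
          exact T.le_max' _ (Finset.mem_filter.mpr ⟨hys j, this⟩)
      rw [this] at hneg
      exact absurd hGd0 (not_lt.mpr hneg.2.le)
    · -- d0 is a y value; F unchanged from d1 to d0
      have : F d1 = F d0 := by
        simp only [hF]
        refine Finset.sum_congr rfl fun i _ => ?_
        congr 1
        simp only [eq_iff_iff]
        constructor
        · exact fun h => h.trans hd1lt.le
        · intro h
          have hne : x i ≠ d0 := by rw [← hj0]; exact hd i j0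
          have : x i < d0 := lt_of_le_of_ne h hne
          exact T.le_max' _ (Finset.mem_filter.mpr ⟨hxs i, this⟩)
      rw [this] at hneg
      exact absurd hFd0 (not_lt.mpr hneg.1.le)
  · -- d0 is the minimum of s
    have hmin : ∀ e ∈ s, d0 ≤ e := by
      intro e he
      by_contra hlt
      exact hTne ⟨e, Finset.mem_filter.mpr ⟨he, not_le.mp hlt⟩⟩
    rcases hd0r with ⟨i0, hi0⟩ | ⟨j0, hj0⟩
    · -- all y j > d0, so G d0 = -n < 0
      have : G d0 = -n := by
        simp only [hG]
        rw [Finset.sum_congr rfl (fun j _ => if_neg ?_)]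
        · simp
        · intro h
          have h1 : d0 ≤ y j := hmin _ (hys j)
          have : y j = d0 := le_antisymm h h1
          exact hd i0 j (by rw [hi0, this])
      rw [this] at hGd0
      omega
    · have : F d0 = -m := by
        simp only [hF]
        rw [Finset.sum_congr rfl (fun i _ => if_neg ?_)]
        · simp
        · intro h
          have h1 : d0 ≤ x i := hmin _ (hxs i)
          have : x i = d0 := le_antisymm h h1
          exact hd i j0 (by rw [this, ← hj0])
      rw [this] at hFd0
      omega

lemma key_ineq {m n : ℕ} (hm : 0 < m) (hn : 0 < n) (x : Fin m → ℝ) (y : Fin n → ℝ)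
    (hd : ∀ i j, x i ≠ y j) :
    (∑ j : Fin n, 2 * min ((Finset.univ.filter fun i => x i < y j).card)
        ((Finset.univ.filter fun i => y j < x i).card))
      + (∑ i : Fin m, 2 * min ((Finset.univ.filter fun j => y j < x i).card)
        ((Finset.univ.filter fun j => x i < y j).card)) ≤ m * n := by
  obtain ⟨d, hcut⟩ := exists_cut hm hn x y hd
  set c : Fin n → ℤ := fun j => if y j ≤ d then 1 else -1 with hc
  set e : Fin m → ℤ := fun i => if x i ≤ d then 1 else -1 with he
  set K : Fin n → ℕ := fun j => (Finset.univ.filter fun i => x i < y j).card with hK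
  set K' : Fin n → ℕ := fun j => (Finset.univ.filter fun i => y j < x i).card with hK'
  set L : Fin m → ℕ := fun i => (Finset.univ.filter fun j => y j < x i).card with hL
  set L' : Fin m → ℕ := fun i => (Finset.univ.filter fun j => x i < y j).card with hL'
  -- complement counts
  have hKtot : ∀ j, K j + K' j = m := by
    intro j
    rw [hK, hK']
    rw [← Finset.card_union_of_disjoint]
    · rw [← Finset.filter_or]
      have h : (Finset.univ.filter fun i => (x i < y j ∨ y j < x i)) = Finset.univ :=
        Finset.filter_true_of_mem (fun i _ => lt_or_gt_of_ne (hd i j))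
      rw [h, Finset.card_univ, Fintype.card_fin]
    · rw [Finset.disjoint_filter]
      intro i _ h1
      exact not_lt.mpr h1.le
  have hLtot : ∀ i, L i + L' i = n := by
    intro i
    rw [hL, hL']
    rw [← Finset.card_union_of_disjoint]
    · rw [← Finset.filter_or]
      have h : (Finset.univ.filter fun j => (y j < x i ∨ x i < y j)) = Finset.univ :=
        Finset.filter_true_of_mem (fun j _ => lt_or_gt_of_ne fun h => hd i j h.symm)
      rw [h, Finset.card_univ, Fintype.card_fin]
    · rw [Finset.disjoint_filter]
      intro j _ h1
      exact not_lt.mpr h1.le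
  -- cast to ℤ and bound
  suffices hZ : ((∑ j : Fin n, 2 * min (K j) (K' j) : ℕ) : ℤ)
      + ((∑ i : Fin m, 2 * min (L i) (L' i) : ℕ) : ℤ) ≤ (m : ℤ) * n by
    exact_mod_cast hZ
  -- per-term bounds
  have hb1 : ∀ j, ((2 * min (K j) (K' j) : ℕ) : ℤ)
      ≤ (K j + K' j : ℤ) - c j * ((K' j : ℤ) - K j) := by
    intro j
    rcases le_or_gt (y j) d with h | h
    · simp only [hc, if_pos h]
      push_cast [Nat.cast_min]
      omega
    · simp only [hc, if_neg (not_le.mpr h)]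
      push_cast [Nat.cast_min]
      omega
  have hb2 : ∀ i, ((2 * min (L i) (L' i) : ℕ) : ℤ)
      ≤ (L i + L' i : ℤ) - e i * ((L' i : ℤ) - L i) := by
    intro i
    rcases le_or_gt (x i) d with h | h
    · simp only [he, if_pos h]
      push_cast [Nat.cast_min]
      omega
    · simp only [he, if_neg (not_le.mpr h)]
      push_cast [Nat.cast_min]
      omega
  -- the cross term T
  have hsig1 : ∀ j, (K' j : ℤ) - K j = ∑ i : Fin m, (if y j < x i then (1:ℤ) else -1) := by
    intro j
    simp only [hK, hK', Finset.card_filter]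
    push_cast
    rw [← Finset.sum_sub_distrib]
    refine Finset.sum_congr rfl fun i _ => ?_
    rcases lt_or_gt_of_ne (hd i j) with h | h
    · simp [h, not_lt.mpr h.le, asymm h]
    · simp [h, asymm h]
  have hsig2 : ∀ i, (L' i : ℤ) - L i = ∑ j : Fin n, -(if y j < x i then (1:ℤ) else -1) := by
    intro i
    simp only [hL, hL', Finset.card_filter]
    push_cast
    rw [← Finset.sum_sub_distrib]
    refine Finset.sum_congr rfl fun j _ => ?_
    rcases lt_or_gt_of_ne (hd i j) with h | h
    · simp [h, asymm h]
    · simp [h, not_lt.mpr h.le, asymm h]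
  have hT : (∑ j : Fin n, c j * ((K' j : ℤ) - K j))
      + (∑ i : Fin m, e i * ((L' i : ℤ) - L i)) ≥ (m : ℤ) * n := by
    have h1 : (∑ j : Fin n, c j * ((K' j : ℤ) - K j))
        = ∑ j : Fin n, ∑ i : Fin m, c j * (if y j < x i then (1:ℤ) else -1) := by
      refine Finset.sum_congr rfl fun j _ => ?_
      rw [hsig1 j, Finset.mul_sum]
    have h2 : (∑ i : Fin m, e i * ((L' i : ℤ) - L i))
        = ∑ j : Fin n, ∑ i : Fin m, -(e i * (if y j < x i then (1:ℤ) else -1)) := by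
      rw [Finset.sum_comm]
      refine Finset.sum_congr rfl fun i _ => ?_
      rw [hsig2 i, Finset.mul_sum]
      refine Finset.sum_congr rfl fun j _ => by ring
    rw [h1, h2]
    simp only [← Finset.sum_add_distrib]
    have hpair : ∀ j i, c j * (if y j < x i then (1:ℤ) else -1)
        + -(e i * (if y j < x i then (1:ℤ) else -1)) = 1 - e i * c j := by
      intro j i
      rcases le_or_gt (y j) d with hy | hy <;> rcases le_or_gt (x i) d with hxi | hxi
      · simp only [hc, he, if_pos hy, if_pos hxi]; ring
      · -- y j ≤ d < x i  so y j < x i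
        have : y j < x i := lt_of_le_of_lt hy hxi
        simp only [hc, he, if_pos hy, if_neg (not_le.mpr hxi), if_pos this]; ring
      · -- x i ≤ d < y j so ¬ y j < x i
        have : ¬ y j < x i := not_lt.mpr (le_of_lt (lt_of_le_of_lt hxi hy))
        simp only [hc, he, if_neg (not_le.mpr hy), if_pos hxi, if_neg this]; ring
      · simp only [hc, he, if_neg (not_le.mpr hy), if_neg (not_le.mpr hxi)]; ring
    calc (∑ j : Fin n, ∑ i : Fin m, (c j * (if y j < x i then (1:ℤ) else -1)
            + -(e i * (if y j < x i then (1:ℤ) else -1))))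
        = ∑ j : Fin n, ∑ i : Fin m, (1 - e i * c j) := by
          refine Finset.sum_congr rfl fun j _ => Finset.sum_congr rfl fun i _ => hpair j i
      _ = ∑ j : Fin n, ((m:ℤ) - (∑ i : Fin m, e i) * c j) := by
          refine Finset.sum_congr rfl fun j _ => ?_
          rw [Finset.sum_sub_distrib, Finset.sum_const, Finset.card_univ, Fintype.card_fin,
            ← Finset.sum_mul]
          simp [nsmul_eq_mul]
      _ = (n : ℤ) * m - (∑ i : Fin m, e i) * (∑ j : Fin n, c j) := by
          rw [Finset.sum_sub_distrib, Finset.sum_const, Finset.card_univ, Fintype.card_fin,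
            ← Finset.mul_sum]
          simp [nsmul_eq_mul]
      _ ≥ (m : ℤ) * n := by nlinarith [hcut]
  -- assemble
  calc ((∑ j : Fin n, 2 * min (K j) (K' j) : ℕ) : ℤ)
        + ((∑ i : Fin m, 2 * min (L i) (L' i) : ℕ) : ℤ)
      ≤ (∑ j : Fin n, ((K j + K' j : ℤ) - c j * ((K' j : ℤ) - K j)))
        + (∑ i : Fin m, ((L i + L' i : ℤ) - e i * ((L' i : ℤ) - L i))) := by
        push_cast
        gcongr with j _ i _
        · exact_mod_cast hb1 j
        · exact_mod_cast hb2 i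
    _ = ((m:ℤ) * n + (n:ℤ) * m)
        - ((∑ j : Fin n, c j * ((K' j : ℤ) - K j)) + (∑ i : Fin m, e i * ((L' i : ℤ) - L i))) := by
        rw [Finset.sum_sub_distrib, Finset.sum_sub_distrib]
        have e1 : (∑ j : Fin n, ((K j : ℤ) + K' j)) = (n : ℤ) * m := by
          have h : ∀ j : Fin n, ((K j : ℤ) + K' j) = (m : ℤ) := fun j => by exact_mod_cast hKtot j
          rw [Finset.sum_congr rfl fun j _ => h j, Finset.sum_const, Finset.card_univ,
            Fintype.card_fin]
          simp [nsmul_eq_mul]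
        have e2 : (∑ i : Fin m, ((L i : ℤ) + L' i)) = (m : ℤ) * n := by
          have h : ∀ i : Fin m, ((L i : ℤ) + L' i) = (n : ℤ) := fun i => by exact_mod_cast hLtot i
          rw [Finset.sum_congr rfl fun i _ => h i, Finset.sum_const, Finset.card_univ,
            Fintype.card_fin]
          simp [nsmul_eq_mul]
        rw [e1, e2]
        ring
    _ ≤ ((m:ℤ) * n + (n:ℤ) * m) - (m : ℤ) * n := by linarith [hT]
    _ = (m : ℤ) * n := by ring


lemma det_bound {m n : ℕ} (hm : 0 < m) (hn : 0 < n) (x : Fin m → ℝ) (y : Fin n → ℝ)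
    (hx : Function.Injective x) (hy : Function.Injective y) (hd : ∀ i j, x i ≠ y j) :
    LS x y + LS y x - 1 ≤ 0 := by
  have hmn : (0:ℝ) < (m : ℝ) * n := by positivity
  rw [LS, LS]
  have hcomm : ((n : ℝ) * m) = ((m : ℝ) * n) := mul_comm _ _
  rw [hcomm, ← add_div, sub_nonpos, div_le_one hmn]
  have hN1 : (∑ i : Fin m, ∑ j : Fin n,
        if empTukey x (x i) ≤ empTukey x (y j) then (1:ℝ) else 0)
      ≤ ((∑ j : Fin n, 2 * min ((Finset.univ.filter fun i => x i < y j).card)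
          ((Finset.univ.filter fun i => y j < x i).card) : ℕ) : ℝ) := by
    rw [Finset.sum_comm]
    push_cast
    refine Finset.sum_le_sum fun j _ => ?_
    rw [Finset.sum_boole]
    exact_mod_cast countA hm x hx (y j) (fun i => hd i j)
  have hN2 : (∑ j : Fin n, ∑ i : Fin m,
        if empTukey y (y j) ≤ empTukey y (x i) then (1:ℝ) else 0)
      ≤ ((∑ i : Fin m, 2 * min ((Finset.univ.filter fun j => y j < x i).card)
          ((Finset.univ.filter fun j => x i < y j).card) : ℕ) : ℝ) := by
    rw [Finset.sum_comm]
    push_cast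
    refine Finset.sum_le_sum fun i _ => ?_
    rw [Finset.sum_boole]
    exact_mod_cast countA hn y hy (x i) (fun j => (hd i j).symm)
  have hkey := key_ineq hm hn x y hd
  calc (∑ i : Fin m, ∑ j : Fin n,
          if empTukey x (x i) ≤ empTukey x (y j) then (1:ℝ) else 0)
        + (∑ j : Fin n, ∑ i : Fin m,
          if empTukey y (y j) ≤ empTukey y (x i) then (1:ℝ) else 0)
      ≤ ((∑ j : Fin n, 2 * min ((Finset.univ.filter fun i => x i < y j).card)
            ((Finset.univ.filter fun i => y j < x i).card) : ℕ) : ℝ)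
        + ((∑ i : Fin m, 2 * min ((Finset.univ.filter fun j => y j < x i).card)
            ((Finset.univ.filter fun j => x i < y j).card) : ℕ) : ℝ) := add_le_add hN1 hN2
    _ ≤ ((m : ℝ) * n) := by exact_mod_cast hkey

/-- Part of Theorem 2.6 (a): for two independent i.i.d. samples from the same continuous
distribution `P` on `ℝ`, almost surely
`L̃S_T(P̂_m, Q̂_n) + L̃S_T(Q̂_n, P̂_m) - 1 ≤ 0`. -/
theorem LS_sum_le_one {m n : ℕ} (hm : 0 < m) (hn : 0 < n)
    {Ω : Type*} [MeasurableSpace Ω] (μ : Measure Ω) [IsProbabilityMeasure μ]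
    (P : Measure ℝ) [IsProbabilityMeasure P] (hP : ∀ c : ℝ, P {c} = 0)
    (Z : (Fin m ⊕ Fin n) → Ω → ℝ) (hmeas : ∀ i, Measurable (Z i))
    (hindep : iIndepFun Z μ)
    (hlaw : ∀ i, Measure.map (Z i) μ = P) :
    ∀ᵐ ω ∂μ,
      LS (fun i => Z (Sum.inl i) ω) (fun j => Z (Sum.inr j) ω)
        + LS (fun j => Z (Sum.inr j) ω) (fun i => Z (Sum.inl i) ω) - 1 ≤ 0 := by
  have hae : ∀ᵐ ω ∂μ, ∀ i j : Fin m ⊕ Fin n, i ≠ j → Z i ω ≠ Z j ω := by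
    rw [ae_all_iff]
    intro i
    rw [ae_all_iff]
    intro j
    by_cases hij : i = j
    · simp [hij]
    · filter_upwards [ae_ne_of_indep μ P hP (hmeas i) (hmeas j)
        (hindep.indepFun hij) (hlaw i) (hlaw j)] with ω hω
      exact fun _ => hω
  filter_upwards [hae] with ω hω
  refine det_bound hm hn _ _ ?_ ?_ ?_
  · intro a b hab
    by_contra hne
    exact hω _ _ (fun h => hne (Sum.inl.inj h)) hab
  · intro a b hab
    by_contra hne
    exact hω _ _ (fun h => hne (Sum.inr.inj h)) hab
  · intro i j
    exact hω (Sum.inl i) (Sum.inr j) (by simp)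
end
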